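/- Let G be a bipartite random graph between sets I (|I| = m) and A (|A| = n) where each edge exists independently with probability p, and let mp ≥ 3 ln(n/δ). For a fixed subset C ⊆ A of size k, suppose every neuron in C has at least d incoming edges from I each with weight (1+γ), every neuron outside C has at most m' incoming edges from C∪I with weight at most (1+cγ) and the rest with weight 1, where cm' < d. If γ ≥ (mp + √(3 m p ln(n/δ)) - d)/(d - c m'), then with probability at least 1 - δ, every neuron outside C has weighted input at most mp + √(3 m p ln(n/δ)) + c·γ·m' < (1+γ)d ≤ weighted input of every neuron in C, so the k-cap of the response to I firing equals C. -/

import Mathlib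

/-!
The unstrengthened in-degree of a neuron outside `C` is a sum of `m` independent Bernoulli(p)
variables, so its moment generating function is `(p eᵗ + 1 - p)ᵐ ≤ exp (mp (eᵗ - 1))`.
Markov's inequality at `t = a / 2mp` gives the upper tail `exp (-a² / 3mp)` for `0 ≤ a ≤ mp`,
which is `δ / n` for `a = √(3 mp ln (n / δ))`; the hypothesis on `γ` says exactly that such a
neuron loses the cap unless its in-degree exceeds `mp + a`, and a union bound over the `n`
neurons concludes.
-/

open MeasureTheory ENNReal ProbabilityTheory Real Finset
open scoped NNReal

set_option linter.deprecated false

noncomputable def bernoulliPi (ι : Type*) [Fintype ι] (q : ℝ≥0) (hq : q ≤ 1) :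
    Measure (ι → Bool) :=
  Measure.pi fun _ => (PMF.bernoulli q hq).toMeasure

instance {ι : Type*} [Fintype ι] {q : ℝ≥0} {hq : q ≤ 1} :
    IsProbabilityMeasure (bernoulliPi ι q hq) := by
  unfold bernoulliPi; infer_instance

lemma mul_exp_add_one_sub_pow_le_exp {q t : ℝ} (hq : 0 ≤ q) (ht : 0 ≤ t) (m : ℕ) :
    (q * exp t + (1 - q)) ^ m ≤ exp (m * q * (exp t - 1)) := by
  have hbase : 0 ≤ q * exp t + (1 - q) := by nlinarith [one_le_exp ht]
  calc (q * exp t + (1 - q)) ^ m ≤ exp (q * (exp t - 1)) ^ m := by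
        gcongr; linarith [add_one_le_exp (q * (exp t - 1))]
    _ = exp (m * q * (exp t - 1)) := by rw [← exp_nat_mul, mul_assoc]

lemma chernoff_exponent_le {μ a : ℝ} (hμ : 0 < μ) (ha : 0 ≤ a) (haμ : a ≤ μ) :
    -(a / (2 * μ) * (μ + a)) + μ * (exp (a / (2 * μ)) - 1) ≤ -(a ^ 2 / (3 * μ)) := by
  set s := a / (2 * μ) with hs
  have hs0 : 0 ≤ s := by positivity
  have hs1 : s ≤ 1 / 2 := by rw [hs, div_le_iff₀ (by positivity)]; linarith
  have ha_eq : a = 2 * μ * s := by rw [hs]; field_simp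
  have hexp : exp s ≤ 1 + s + s ^ 2 / 2 + s ^ 3 * (2 / 9) := by
    have h := Real.exp_bound' hs0 (by linarith) (n := 3) (by norm_num)
    norm_num [Finset.sum_range_succ, Nat.factorial] at h
    linarith
  have hrhs : a ^ 2 / (3 * μ) = 4 / 3 * μ * s ^ 2 := by rw [ha_eq]; field_simp; ring
  -- with `a = 2μs` the claim reads `μ (eˢ - 1 - s - 2s²) ≤ -(4/3) μ s²`, and the cubic
  -- Taylor term is absorbed because `s ≤ 3/4`
  rw [hrhs, ha_eq]
  nlinarith [mul_le_mul_of_nonneg_left hexp hμ.le,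
    mul_nonneg (mul_nonneg hμ.le (sq_nonneg s)) (show (0:ℝ) ≤ 3 / 4 - s by linarith)]

section
variable {ι κ : Type*} [Fintype ι] [Fintype κ] {q : ℝ≥0} (hq : q ≤ 1)

lemma mgf_bernoulli (t : ℝ) :
    mgf (fun b : Bool => if b then 1 else 0) (PMF.bernoulli q hq).toMeasure t
      = q * exp t + (1 - q) := by
  simp [mgf, PMF.integral_eq_sum, PMF.bernoulli_apply, hq]

lemma mgf_card_filter_true {g : κ → ι} (hg : g.Injective) (t : ℝ) :
    mgf (fun ω : ι → Bool => (#{k | ω (g k) = true} : ℝ)) (bernoulliPi ι q hq) t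
      = (q * exp t + (1 - q)) ^ Fintype.card κ := by
  set X : Bool → ℝ := fun b => if b then 1 else 0
  have hcount : (fun ω : ι → Bool => (#{k | ω (g k) = true} : ℝ))
      = ∑ k, fun ω => X (ω (g k)) := by
    ext ω; simp only [X, Finset.card_filter, Nat.cast_sum, Finset.sum_apply]; push_cast; rfl
  have hindep : iIndepFun (fun k (ω : ι → Bool) => X (ω (g k))) (bernoulliPi ι q hq) :=
    (iIndepFun_pi (X := fun _ => X) fun _ => .of_discrete).precomp hg
  have hmgf : ∀ i, mgf (fun ω : ι → Bool => X (ω i)) (bernoulliPi ι q hq) t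
      = q * exp t + (1 - q) := by
    intro i
    rw [← mgf_bernoulli hq t,
      ← (measurePreserving_eval (fun _ : ι => (PMF.bernoulli q hq).toMeasure) i).map_eq]
    exact (mgf_map (μ := bernoulliPi ι q hq) (X := X) (Y := fun ω => ω i)
      (measurable_pi_apply i).aemeasurable
      (Measurable.of_discrete (f := fun b : Bool => exp (t * X b))).aestronglyMeasurable).symm
  rw [hcount, hindep.mgf_sum fun k =>
    (Measurable.of_discrete (f := X)).comp (measurable_pi_apply (g k))]
  simp [hmgf]

lemma bernoulliPi_card_filter_true_ge_le {g : κ → ι} (hg : g.Injective) (ε : ℝ) {t : ℝ}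
    (ht : 0 ≤ t) :
    bernoulliPi ι q hq {ω | ε ≤ #{k | ω (g k) = true}}
      ≤ ENNReal.ofReal (exp (-t * ε) * (q * exp t + (1 - q)) ^ Fintype.card κ) := by
  rw [← ofReal_measureReal, ← mgf_card_filter_true hq hg t]
  exact ENNReal.ofReal_le_ofReal (measure_ge_le_exp_mul_mgf ε ht .of_finite)

theorem bernoulliPi_card_filter_true_ge_add_sqrt_le {g : κ → ι} (hg : g.Injective) {L : ℝ}
    (hL : 0 < L) (hLμ : 3 * L ≤ Fintype.card κ * q) :
    bernoulliPi ι q hq {ω | Fintype.card κ * q + √(3 * (Fintype.card κ * q) * L)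
        ≤ #{k | ω (g k) = true}} ≤ ENNReal.ofReal (exp (-L)) := by
  set μ : ℝ := Fintype.card κ * q
  set a := √(3 * μ * L)
  have hμ : 0 < μ := by linarith
  have ha2 : a ^ 2 = 3 * μ * L := sq_sqrt (by positivity)
  have haμ : a ≤ μ := Real.sqrt_le_iff.2 ⟨hμ.le, by nlinarith⟩
  set t := a / (2 * μ)
  calc _ ≤ ENNReal.ofReal (exp (-t * (μ + a)) * (q * exp t + (1 - q)) ^ Fintype.card κ) :=
        bernoulliPi_card_filter_true_ge_le hq hg _ (by positivity)
    _ ≤ ENNReal.ofReal (exp (-L)) := by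
      refine ENNReal.ofReal_le_ofReal ?_
      calc exp (-t * (μ + a)) * (q * exp t + (1 - q)) ^ Fintype.card κ
          ≤ exp (-t * (μ + a)) * exp (μ * (exp t - 1)) := by
            gcongr; exact mul_exp_add_one_sub_pow_le_exp q.2 (by positivity) _
        _ = exp (-(t * (μ + a)) + μ * (exp t - 1)) := by rw [exp_add, neg_mul]
        _ ≤ exp (-(a ^ 2 / (3 * μ))) :=
            exp_le_exp.2 (chernoff_exponent_le hμ (by positivity) haμ)
        _ = exp (-L) := by rw [ha2]; field_simp
end

lemma ofReal_one_sub_le_of_measure_compl_le {Ω : Type*} [MeasurableSpace Ω] {μ : Measure Ω}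
    [IsProbabilityMeasure μ] {s : Set Ω} {δ : ℝ} (hδ : 0 ≤ δ)
    (h : μ sᶜ ≤ ENNReal.ofReal δ) :
    ENNReal.ofReal (1 - δ) ≤ μ s := by
  have hcover : 1 ≤ μ s + μ sᶜ := by
    rw [← measure_univ (μ := μ), ← Set.union_compl_self s]; exact measure_union_le _ _
  rw [ENNReal.ofReal_sub _ hδ, ENNReal.ofReal_one, tsub_le_iff_right]
  exact hcover.trans (add_le_add_right h _)

lemma natCast_mul_ofReal_div_le {δ : ℝ} (hδ : 0 ≤ δ) (n : ℕ) :
    (n : ℝ≥0∞) * ENNReal.ofReal (δ / n) ≤ ENNReal.ofReal δ := by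
  rw [← ENNReal.ofReal_natCast, ← ENNReal.ofReal_mul n.cast_nonneg]
  refine ENNReal.ofReal_le_ofReal ?_
  rcases n.eq_zero_or_pos with rfl | hn
  · simpa using hδ
  · rw [mul_div_cancel₀ _ (by positivity)]

theorem assembly_stability {I A : Type} [Fintype I] [Fintype A]
    (p : ℝ≥0∞) (hp : p ≤ 1) (γ c d m' δ : ℝ) (C : Finset A)
    (m n : ℕ) (hm : Fintype.card I = m) (hn : Fintype.card A = n)
    (hδ : 0 < δ) (hδ1 : δ < 1)
    (hmp : 3 * Real.log (n / δ) ≤ (m : ℝ) * p.toReal)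
    (hcm : c * m' < d)
    (hγ : γ ≥ ((m : ℝ) * p.toReal +
        Real.sqrt (3 * m * p.toReal * Real.log (n / δ)) - d) / (d - c * m')) :
    ENNReal.ofReal (1 - δ) ≤
      (Measure.pi fun _ : I × A => (PMF.bernoulli p.toNNReal
        (by simpa using ENNReal.toNNReal_mono ENNReal.one_ne_top hp)).toMeasure)
        {ω : I × A → Bool | ∀ j : A, j ∉ C →
          ((Finset.univ.filter fun i : I => ω (i, j) = true).card : ℝ)
              + c * γ * m' < (1 + γ) * d} := by
  have hq : p.toNNReal ≤ 1 := by simpa using ENNReal.toNNReal_mono ENNReal.one_ne_top hp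
  change ENNReal.ofReal (1 - δ) ≤ bernoulliPi (I × A) p.toNNReal hq _
  set L := Real.log (n / δ)
  set θ := (m : ℝ) * p.toReal + √(3 * m * p.toReal * L)
  have htail (j : A) :
      bernoulliPi (I × A) p.toNNReal hq {ω | θ ≤ #{i | ω (i, j) = true}}
        ≤ ENNReal.ofReal (δ / n) := by
    have hn1 : (1 : ℝ) ≤ n := by rw [← hn]; exact_mod_cast Fintype.card_pos_iff.2 ⟨j⟩
    have hL : 0 < L := Real.log_pos ((one_lt_div hδ).2 (by linarith))
    have h := bernoulliPi_card_filter_true_ge_add_sqrt_le hq (Prod.mk_left_injective j) hL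
      (by rw [hm]; exact hmp)
    rwa [hm, exp_neg, exp_log (by positivity), inv_div, ← mul_assoc] at h
  have hθ : θ ≤ (1 + γ) * d - c * γ * m' := by
    have := (div_le_iff₀ (sub_pos.2 hcm)).1 hγ
    linarith
  have hsub : {ω : I × A → Bool | ∀ j : A, j ∉ C →
      (#{i | ω (i, j) = true} : ℝ) + c * γ * m' < (1 + γ) * d}ᶜ
        ⊆ ⋃ j, {ω | θ ≤ #{i | ω (i, j) = true}} := by
    intro ω hω
    simp only [Set.mem_compl_iff, Set.mem_ofPred_eq, not_forall, not_lt] at hω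
    obtain ⟨j, -, hj⟩ := hω
    exact Set.mem_iUnion.2 ⟨j, by simp only [Set.mem_ofPred_eq]; linarith⟩
  refine ofReal_one_sub_le_of_measure_compl_le hδ.le ((measure_mono hsub).trans ?_)
  calc _ ≤ ∑ j, bernoulliPi (I × A) p.toNNReal hq {ω | θ ≤ #{i | ω (i, j) = true}} :=
        measure_iUnion_fintype_le _ _
    _ ≤ ∑ _j : A, ENNReal.ofReal (δ / n) := Finset.sum_le_sum fun j _ => htail j
    _ ≤ ENNReal.ofReal δ := by
      rw [Finset.sum_const, Finset.card_univ, hn, nsmul_eq_mul]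
      exact natCast_mul_ofReal_div_le hδ.le n
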